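/- Let χ₃ have the chi(3) distribution and β ~ beta(1,2), independent. Then χ₃(1-β) has density f(t) = 4t·Φ̄(t) for t > 0, where Φ̄(t) = ∫_t^∞ φ(x) dx is the standard normal tail. -/

import Mathlib

/-!
Conditionally on `χ₃ = x > 0`, the event `χ₃ (1 - β) ≤ t` is `1 - β ≤ t / x`, and `1 - β` has
density `2v` on `(0, 1)`, so its probability is `min 1 (t / x) ^ 2` (and `0` if `t < 0`).
Integrating against the chi(3) density, for `t ≥ 0`
`P(χ₃ (1 - β) ≤ t) = ∫₀ᵗ 2x²φ(x) dx + 2t² Φ̄(t)`,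
and an integration by parts with `Φ̄' = -φ` identifies this with `∫₀ᵗ 4s Φ̄(s) ds`.
Two finite measures on `ℝ` with the same distribution function are equal.
-/

open MeasureTheory Set ProbabilityTheory Real

noncomputable def stdGaussianPDF (x : ℝ) : ℝ :=
  (Real.sqrt (2 * Real.pi))⁻¹ * Real.exp (-x ^ 2 / 2)

/-- The standard normal tail function. -/
noncomputable def stdGaussianTail (t : ℝ) : ℝ := ∫ x in Ioi t, stdGaussianPDF x

open ENNReal (ofReal)

theorem ProbabilityTheory.IndepFun.map_apply_eq_lintegral {Ω α β γ : Type*}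
    {mΩ : MeasurableSpace Ω} [MeasurableSpace α] [MeasurableSpace β] [MeasurableSpace γ]
    {μ : Measure Ω} [IsFiniteMeasure μ] {X : Ω → α} {Y : Ω → β} (hXY : IndepFun X Y μ)
    (hX : Measurable X) (hY : Measurable Y) {f : α → β → γ}
    (hf : Measurable (Function.uncurry f)) {s : Set γ} (hs : MeasurableSet s) :
    μ.map (fun ω => f (X ω) (Y ω)) s = ∫⁻ x, μ.map Y (f x ⁻¹' s) ∂μ.map X := by
  calc μ.map (fun ω => f (X ω) (Y ω)) s
      = μ.map (fun ω => (X ω, Y ω)) (Function.uncurry f ⁻¹' s) := by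
        rw [Measure.map_apply (f := fun ω => f (X ω) (Y ω)) (hf.comp (hX.prodMk hY)) hs,
          Measure.map_apply (hX.prodMk hY) (hf hs)]
        rfl
    _ = ((μ.map X).prod (μ.map Y)) (Function.uncurry f ⁻¹' s) := by
        rw [hXY.map_prod_eq_prod_map_map hX.aemeasurable hY.aemeasurable]
    _ = ∫⁻ x, μ.map Y (f x ⁻¹' s) ∂μ.map X := Measure.prod_apply (hf hs)

lemma hasDerivAt_integral_Ioi {E : Type*} [NormedAddCommGroup E] [NormedSpace ℝ E]
    [CompleteSpace E] {f : ℝ → E} (hf : Integrable f) (hc : Continuous f) (t : ℝ) :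
    HasDerivAt (fun s => ∫ x in Ioi s, f x) (-f t) t := by
  have hsplit :
      (fun s => ∫ x in Ioi s, f x) = fun s => (∫ x in Ioi 0, f x) - ∫ x in 0..s, f x :=
    funext fun s => by
      rw [← intervalIntegral.integral_Ioi_sub_Ioi' hf.integrableOn hf.integrableOn,
        sub_sub_cancel]
  rw [hsplit]
  exact (hc.integral_hasStrictDerivAt 0 t).hasDerivAt.const_sub _

lemma lintegral_Ioc_ofReal_eq_ofReal_integral {f : ℝ → ℝ} {a b : ℝ} (hab : a ≤ b)
    (hf : ContinuousOn f (Icc a b)) (hf₀ : ∀ x ∈ Ioc a b, 0 ≤ f x) :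
    ∫⁻ x in Ioc a b, ofReal (f x) = ofReal (∫ x in a..b, f x) := by
  rw [intervalIntegral.integral_of_le hab, ofReal_integral_eq_lintegral_ofReal
    ((hf.integrableOn_Icc).mono_set Ioc_subset_Icc_self)
    ((ae_restrict_iff' measurableSet_Ioc).2 (Filter.Eventually.of_forall hf₀))]

lemma stdGaussianPDF_eq_gaussianPDFReal : stdGaussianPDF = gaussianPDFReal 0 1 := by
  ext x
  simp [stdGaussianPDF, gaussianPDFReal]

lemma integrable_stdGaussianPDF : Integrable stdGaussianPDF :=
  stdGaussianPDF_eq_gaussianPDFReal ▸ integrable_gaussianPDFReal 0 1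

lemma stdGaussianPDF_nonneg (x : ℝ) : 0 ≤ stdGaussianPDF x :=
  stdGaussianPDF_eq_gaussianPDFReal ▸ gaussianPDFReal_nonneg 0 1 x

@[fun_prop]
lemma continuous_stdGaussianPDF : Continuous stdGaussianPDF := by
  unfold stdGaussianPDF
  fun_prop

lemma hasDerivAt_stdGaussianTail (t : ℝ) :
    HasDerivAt stdGaussianTail (-stdGaussianPDF t) t :=
  hasDerivAt_integral_Ioi integrable_stdGaussianPDF continuous_stdGaussianPDF t

@[fun_prop]
lemma continuous_stdGaussianTail : Continuous stdGaussianTail :=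
  continuous_iff_continuousAt.2 fun t => (hasDerivAt_stdGaussianTail t).continuousAt

lemma stdGaussianTail_nonneg (t : ℝ) : 0 ≤ stdGaussianTail t :=
  setIntegral_nonneg measurableSet_Ioi fun x _ => stdGaussianPDF_nonneg x

lemma integral_four_mul_stdGaussianTail (t : ℝ) :
    ∫ s in (0 : ℝ)..t, 4 * s * stdGaussianTail s
      = (∫ x in (0 : ℝ)..t, 2 * x ^ 2 * stdGaussianPDF x) + 2 * t ^ 2 * stdGaussianTail t := by
  have hparts := intervalIntegral.integral_mul_deriv_eq_deriv_mul (a := 0) (b := t)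
    (u := stdGaussianTail) (v := fun s => 2 * s ^ 2) (v' := fun s => 4 * s)
    (fun s _ => hasDerivAt_stdGaussianTail s)
    (fun s _ => by convert (hasDerivAt_pow 2 s).const_mul (2 : ℝ) using 1; ring)
    (continuous_stdGaussianPDF.neg.intervalIntegrable _ _)
    ((continuous_const.mul continuous_id).intervalIntegrable _ _)
  simp only [neg_mul, intervalIntegral.integral_neg] at hparts
  simp only [mul_comm (stdGaussianTail _), mul_comm (stdGaussianPDF _)] at hparts
  rw [hparts]
  ring

noncomputable def beta12PDF (u : ℝ) : ℝ := if u ∈ Ioo (0 : ℝ) 1 then 2 * (1 - u) else 0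

noncomputable def chi3PDF (x : ℝ) : ℝ := if 0 < x then 2 * x ^ 2 * stdGaussianPDF x else 0

noncomputable def chi3MulOneSubBeta12PDF (t : ℝ) : ℝ :=
  if 0 < t then 4 * t * stdGaussianTail t else 0

lemma lintegral_Ioo_ofReal_two_mul_one_sub (m : ℝ) :
    ∫⁻ u in Ioo m 1, ofReal (2 * (1 - u)) = ofReal (max (1 - m) 0 ^ 2) := by
  rcases le_or_gt 1 m with hm | hm
  · simp [Ioo_eq_empty_of_le hm, max_eq_right (sub_nonpos.2 hm)]
  rw [Measure.restrict_congr_set Ioo_ae_eq_Ioc, lintegral_Ioc_ofReal_eq_ofReal_integral hm.le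
    (by fun_prop) (fun u hu => by linarith [hu.2]), max_eq_left (by linarith)]
  congr 1
  rw [intervalIntegral.integral_comp_sub_left (fun v => 2 * v),
    intervalIntegral.integral_const_mul, integral_id]
  ring

lemma beta12_measure_Ici (a : ℝ) :
    volume.withDensity (fun u => ofReal (beta12PDF u)) (Ici a)
      = ofReal (max (1 - max 0 a) 0 ^ 2) := by
  have hdens : (fun u => ofReal (beta12PDF u))
      = (Ioo 0 1).indicator fun u => ofReal (2 * (1 - u)) := by
    funext u
    by_cases hu : u ∈ Ioo (0 : ℝ) 1 <;> simp [beta12PDF, hu]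
  have hinter : Ioo (0 : ℝ) 1 ∩ Ioi a = Ioo (max 0 a) 1 := by
    ext u
    simp only [mem_inter_iff, mem_Ioo, mem_Ioi, max_lt_iff]
    tauto
  rw [withDensity_apply _ measurableSet_Ici, Measure.restrict_congr_set Ioi_ae_eq_Ici.symm, hdens,
    lintegral_indicator measurableSet_Ioo, Measure.restrict_restrict measurableSet_Ioo, hinter,
    lintegral_Ioo_ofReal_two_mul_one_sub]

lemma beta12_measure_preimage_mul_one_sub_Iic {x : ℝ} (hx : 0 < x) (t : ℝ) :
    volume.withDensity (fun u => ofReal (beta12PDF u)) ((fun u => x * (1 - u)) ⁻¹' Iic t)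
      = ofReal (max (min 1 (t / x)) 0 ^ 2) := by
  have hslice : (fun u => x * (1 - u)) ⁻¹' Iic t = Ici (1 - t / x) := by
    ext u
    rw [mem_preimage, mem_Iic, mem_Ici, sub_le_comm, le_div_iff₀' hx]
  rw [hslice, beta12_measure_Ici, ← min_sub_sub_left, sub_zero, sub_sub_cancel]

lemma chi3PDF_nonneg (x : ℝ) : 0 ≤ chi3PDF x := by
  unfold chi3PDF
  split_ifs
  exacts [mul_nonneg (by positivity) (stdGaussianPDF_nonneg x), le_rfl]

lemma measurable_chi3PDF : Measurable chi3PDF :=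
  Measurable.ite measurableSet_Ioi (by fun_prop) measurable_const

lemma lintegral_chi3_beta12_measure_preimage_mul_one_sub_Iic (t : ℝ) :
    ∫⁻ x, volume.withDensity (fun u => ofReal (beta12PDF u)) ((fun u => x * (1 - u)) ⁻¹' Iic t)
        ∂volume.withDensity (fun x => ofReal (chi3PDF x))
      = ∫⁻ x, ofReal (chi3PDF x * max (min 1 (t / x)) 0 ^ 2) := by
  have hslice : Measurable fun x =>
      volume.withDensity (fun u => ofReal (beta12PDF u)) ((fun u => x * (1 - u)) ⁻¹' Iic t) :=
    measurable_measure_prodMk_left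
      ((by fun_prop : Measurable fun p : ℝ × ℝ => p.1 * (1 - p.2)) measurableSet_Iic)
  rw [lintegral_withDensity_eq_lintegral_mul _ measurable_chi3PDF.ennreal_ofReal hslice]
  refine lintegral_congr fun x => ?_
  rcases lt_or_ge 0 x with hx | hx
  · rw [Pi.mul_apply, beta12_measure_preimage_mul_one_sub_Iic hx,
      ← ENNReal.ofReal_mul (chi3PDF_nonneg x)]
  · simp [chi3PDF, not_lt.2 hx]

lemma lintegral_chi3PDF_mul_of_neg {t : ℝ} (ht : t < 0) :
    ∫⁻ x, ofReal (chi3PDF x * max (min 1 (t / x)) 0 ^ 2) = 0 := by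
  have hzero : ∀ x, chi3PDF x * max (min 1 (t / x)) 0 ^ 2 = 0 := by
    intro x
    rcases lt_or_ge 0 x with hx | hx
    · rw [max_eq_right (min_le_of_right_le (div_neg_of_neg_of_pos ht hx).le)]
      ring
    · simp [chi3PDF, not_lt.2 hx]
  simp [hzero]

lemma lintegral_chi3PDF_mul {t : ℝ} (ht : 0 ≤ t) :
    ∫⁻ x, ofReal (chi3PDF x * max (min 1 (t / x)) 0 ^ 2)
      = ofReal ((∫ x in (0 : ℝ)..t, 2 * x ^ 2 * stdGaussianPDF x)
          + 2 * t ^ 2 * stdGaussianTail t) := by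
  have hsplit : ∀ x, ofReal (chi3PDF x * max (min 1 (t / x)) 0 ^ 2)
      = (Ioc 0 t).indicator (fun x => ofReal (2 * x ^ 2 * stdGaussianPDF x)) x
        + (Ioi t).indicator (fun x => ofReal (2 * t ^ 2 * stdGaussianPDF x)) x := by
    intro x
    rcases le_or_gt x 0 with hx | hx
    · simp [chi3PDF, not_lt.2 hx, hx.trans ht]
    rcases le_or_gt x t with hxt | hxt
    · simp [chi3PDF, hx, hxt, (one_le_div hx).2 hxt]
    · rw [indicator_of_notMem (fun h => hxt.not_ge h.2), indicator_of_mem (mem_Ioi.2 hxt),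
        zero_add, min_eq_right ((div_le_one hx).2 hxt.le), max_eq_left (div_nonneg ht hx.le),
        chi3PDF, if_pos hx]
      congr 1
      field_simp
  have hnonneg : ∀ c x, 0 ≤ 2 * c ^ 2 * stdGaussianPDF x :=
    fun c x => mul_nonneg (by positivity) (stdGaussianPDF_nonneg x)
  have hmeas : Measurable fun x => ofReal (2 * x ^ 2 * stdGaussianPDF x) := by fun_prop
  rw [lintegral_congr hsplit, lintegral_add_left (hmeas.indicator measurableSet_Ioc),
    lintegral_indicator measurableSet_Ioc, lintegral_indicator measurableSet_Ioi,
    lintegral_Ioc_ofReal_eq_ofReal_integral ht (by fun_prop) (fun x _ => hnonneg x x),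
    ← ofReal_integral_eq_lintegral_ofReal (integrable_stdGaussianPDF.const_mul _).integrableOn
      (Filter.Eventually.of_forall (hnonneg t)), integral_const_mul, ← stdGaussianTail,
    ← ENNReal.ofReal_add (intervalIntegral.integral_nonneg ht fun x _ => hnonneg x x)
      (mul_nonneg (by positivity) (stdGaussianTail_nonneg t))]

lemma withDensity_chi3MulOneSubBeta12PDF_Iic (t : ℝ) :
    volume.withDensity (fun s => ofReal (chi3MulOneSubBeta12PDF s)) (Iic t)
      = ∫⁻ s in Ioc 0 t, ofReal (4 * s * stdGaussianTail s) := by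
  have hdens : (fun s => ofReal (chi3MulOneSubBeta12PDF s))
      = (Ioi 0).indicator fun s => ofReal (4 * s * stdGaussianTail s) := by
    funext s
    by_cases hs : 0 < s <;> simp [chi3MulOneSubBeta12PDF, hs]
  rw [withDensity_apply _ measurableSet_Iic, hdens, lintegral_indicator measurableSet_Ioi,
    Measure.restrict_restrict measurableSet_Ioi, Ioi_inter_Iic]

theorem chi3_times_one_sub_beta12_density
    {Ω : Type*} [MeasureSpace Ω] [IsProbabilityMeasure (ℙ : Measure Ω)]
    (C B : Ω → ℝ) (hMC : Measurable C) (hMB : Measurable B)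
    (hC : Measure.map C ℙ
      = volume.withDensity (fun x => ENNReal.ofReal
          (if 0 < x then 2 * x ^ 2 * stdGaussianPDF x else 0)))
    (hB : Measure.map B ℙ
      = volume.withDensity (fun u => ENNReal.ofReal
          (if u ∈ Ioo (0 : ℝ) 1 then 2 * (1 - u) else 0)))
    (hInd : IndepFun C B ℙ) :
    Measure.map (fun ω => C ω * (1 - B ω)) ℙ
      = volume.withDensity (fun t => ENNReal.ofReal
          (if 0 < t then 4 * t * stdGaussianTail t else 0)) := by
  change _ = volume.withDensity fun x => ofReal (chi3PDF x) at hC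
  change _ = volume.withDensity fun u => ofReal (beta12PDF u) at hB
  change _ = volume.withDensity fun t => ofReal (chi3MulOneSubBeta12PDF t)
  have : IsProbabilityMeasure (Measure.map (fun ω => C ω * (1 - B ω)) ℙ) :=
    Measure.isProbabilityMeasure_map (by fun_prop)
  refine Measure.ext_of_Iic _ _ fun t => ?_
  rw [hInd.map_apply_eq_lintegral hMC hMB (f := fun x u => x * (1 - u)) (by fun_prop)
    measurableSet_Iic, hC, hB, lintegral_chi3_beta12_measure_preimage_mul_one_sub_Iic,
    withDensity_chi3MulOneSubBeta12PDF_Iic]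
  rcases lt_or_ge t 0 with ht | ht
  · rw [lintegral_chi3PDF_mul_of_neg ht, Ioc_eq_empty (not_lt.2 ht.le), Measure.restrict_empty,
      lintegral_zero_measure]
  · rw [lintegral_chi3PDF_mul ht, lintegral_Ioc_ofReal_eq_ofReal_integral ht (by fun_prop)
      (fun s hs => mul_nonneg (by linarith [hs.1]) (stdGaussianTail_nonneg s)),
      integral_four_mul_stdGaussianTail]
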